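/- Let ρ : [0,1] → ℝ be a nonnegative integrable function and let 0 < M ≤ K be constants with M ≤ ∫₀¹ ρ(x) dx ≤ K. Then for any r > 0 and C̄ > 0 there exists a constant C = C(M, K, r, C̄) > 0 such that every positive v ∈ C¹([0,1]) with ∫₀¹ ρ(x) |v(x)| dx ≤ C̄ satisfies sup_{x∈[0,1]} v(x)^r ≤ C (∫₀¹ ((v^r)'(x))² dx)^{1/2} + C. -/

import Mathlib

/-!
Let `x₀` be a minimum point of `v` on `[0,1]`. Weighting by `ρ` gives
`M v(x₀) ≤ ∫ ρ v ≤ C̄`, so `v(x₀)^r ≤ (C̄/M)^r`. By the fundamental theorem of calculus,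
`v(x)^r - v(x₀)^r ≤ ∫₀¹ |(v^r)'|`, and Cauchy–Schwarz on the unit interval bounds this by
`‖(v^r)'‖_{L²}`. Hence `C = max ((C̄/M)^r) 1` works.
-/

open Real MeasureTheory Set intervalIntegral

theorem sq_integral_le_mul_integral_sq {f : ℝ → ℝ} {a b : ℝ} (hab : a ≤ b)
    (hf : IntervalIntegrable f volume a b)
    (hf2 : IntervalIntegrable (fun x => f x ^ 2) volume a b) :
    (∫ x in a..b, f x) ^ 2 ≤ (b - a) * ∫ x in a..b, f x ^ 2 := by
  -- `t ↦ ∫ (f - t)²` is a nonnegative quadratic, so its discriminant is nonpositive.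
  have hquad : ∀ t : ℝ, 0 ≤ (b - a) * (t * t) + (-2 * ∫ x in a..b, f x) * t
      + ∫ x in a..b, f x ^ 2 := by
    intro t
    have hexpand : (∫ x in a..b, (f x - t) ^ 2)
        = (b - a) * (t * t) + (-2 * ∫ x in a..b, f x) * t + ∫ x in a..b, f x ^ 2 := by
      have hsq : (fun x => (f x - t) ^ 2) = fun x => (f x ^ 2 + -2 * t * f x) + t * t := by
        ext x; ring
      rw [hsq, integral_add (hf2.add (hf.const_mul _)) intervalIntegrable_const,
        integral_add hf2 (hf.const_mul _), intervalIntegral.integral_const_mul,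
        intervalIntegral.integral_const, smul_eq_mul]
      ring
    rw [← hexpand]
    exact integral_nonneg hab fun x _ => sq_nonneg _
  have := discrim_le_zero hquad
  rw [discrim] at this
  linarith

theorem integral_abs_le_sqrt_mul_integral_sq {f : ℝ → ℝ} {a b : ℝ} (hab : a ≤ b)
    (hf : ContinuousOn f (Icc a b)) :
    ∫ x in a..b, |f x| ≤ √((b - a) * ∫ x in a..b, f x ^ 2) := by
  rw [← uIcc_of_le hab] at hf
  have hsq := sq_integral_le_mul_integral_sq hab hf.abs.intervalIntegrable
    (hf.abs.pow 2).intervalIntegrable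
  simp only [sq_abs] at hsq
  exact (le_abs_self _).trans (abs_le_sqrt hsq)

theorem integral_derivWithin_Icc_of_Icc_subset {g : ℝ → ℝ} {a b c d : ℝ}
    (hg : ContDiffOn ℝ 1 g (Icc a b)) (hcd : c ≤ d) (hsub : Icc c d ⊆ Icc a b) :
    ∫ x in c..d, derivWithin g (Icc a b) x = g d - g c := by
  rw [← integral_derivWithin_Icc_of_contDiffOn_Icc (hg.mono hsub) hcd]
  refine integral_congr_uIoo fun x hx => ?_
  rw [uIoo_of_le hcd] at hx
  have hx' : Icc c d ∈ nhds x := Icc_mem_nhds hx.1 hx.2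
  rw [derivWithin_of_mem_nhds hx', derivWithin_of_mem_nhds (Filter.mem_of_superset hx' hsub)]

theorem abs_sub_le_integral_abs_derivWithin {g : ℝ → ℝ} {a b x y : ℝ} (hab : a < b)
    (hg : ContDiffOn ℝ 1 g (Icc a b)) (hx : x ∈ Icc a b) (hy : y ∈ Icc a b) :
    |g x - g y| ≤ ∫ t in a..b, |derivWithin g (Icc a b) t| := by
  wlog hyx : y ≤ x generalizing x y
  · rw [abs_sub_comm]
    exact this hy hx (le_of_not_ge hyx)
  have hD : ContinuousOn (derivWithin g (Icc a b)) (uIcc a b) := by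
    rw [uIcc_of_le hab.le]
    exact hg.continuousOn_derivWithin (uniqueDiffOn_Icc hab) le_rfl
  calc |g x - g y| = |∫ t in y..x, derivWithin g (Icc a b) t| := by
        rw [integral_derivWithin_Icc_of_Icc_subset hg hyx (Icc_subset_Icc hy.1 hx.2)]
    _ ≤ ∫ t in y..x, |derivWithin g (Icc a b) t| := abs_integral_le_integral_abs hyx
    _ ≤ ∫ t in a..b, |derivWithin g (Icc a b) t| :=
        integral_mono_interval hy.1 hyx hx.2 (Filter.Eventually.of_forall fun _ => abs_nonneg _)
          hD.abs.intervalIntegrable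

theorem exists_mul_integral_le_integral_mul {ρ v : ℝ → ℝ} {a b : ℝ} (hab : a ≤ b)
    (hρ : ∀ x ∈ Icc a b, 0 ≤ ρ x) (hρi : IntervalIntegrable ρ volume a b)
    (hv : ContinuousOn v (Icc a b)) :
    ∃ x₀ ∈ Icc a b, v x₀ * ∫ x in a..b, ρ x ≤ ∫ x in a..b, ρ x * v x := by
  obtain ⟨x₀, hx₀, hmin⟩ := isCompact_Icc.exists_isMinOn (nonempty_Icc.2 hab) hv
  refine ⟨x₀, hx₀, ?_⟩
  rw [mul_comm, ← intervalIntegral.integral_mul_const]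
  rw [← uIcc_of_le hab] at hv
  exact integral_mono_on hab (hρi.mul_const _) (hρi.mul_continuousOn hv)
    fun x hx => mul_le_mul_of_nonneg_left (hmin hx) (hρ x hx)

theorem stmt1_general (ρ : ℝ → ℝ) (M : ℝ) (hM : 0 < M)
    (hρ_nonneg : ∀ x ∈ Set.Icc (0:ℝ) 1, 0 ≤ ρ x)
    (hρ_int : IntervalIntegrable ρ MeasureTheory.volume 0 1)
    (hmass_low : M ≤ ∫ x in (0:ℝ)..1, ρ x)
    (r Cbar : ℝ) (hr : 0 < r) :
    ∃ C : ℝ, 0 < C ∧ ∀ v : ℝ → ℝ, ContDiffOn ℝ 1 v (Set.Icc 0 1) →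
      (∀ x ∈ Set.Icc (0:ℝ) 1, 0 < v x) →
      (∫ x in (0:ℝ)..1, ρ x * |v x|) ≤ Cbar →
      ∀ x ∈ Set.Icc (0:ℝ) 1,
        v x ^ r ≤ C * Real.sqrt (∫ y in (0:ℝ)..1,
            (derivWithin (fun z => v z ^ r) (Set.Icc 0 1) y) ^ 2) + C := by
  set C := max ((Cbar / M) ^ r) 1
  refine ⟨C, one_pos.trans_le (le_max_right _ _), fun v hv hvpos hvint x hx => ?_⟩
  set g : ℝ → ℝ := fun z => v z ^ r
  have hg : ContDiffOn ℝ 1 g (Icc 0 1) := hv.rpow_const_of_ne fun z hz => (hvpos z hz).ne'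
  obtain ⟨x₀, hx₀, hx₀_le⟩ :=
    exists_mul_integral_le_integral_mul zero_le_one hρ_nonneg hρ_int hv.continuousOn.abs
  have hvx₀ : v x₀ ≤ Cbar / M := by
    rw [le_div_iff₀ hM]
    calc v x₀ * M ≤ |v x₀| * ∫ x in (0:ℝ)..1, ρ x :=
          mul_le_mul (le_abs_self _) hmass_low hM.le (abs_nonneg _)
      _ ≤ Cbar := hx₀_le.trans hvint
  have hgx₀ : g x₀ ≤ C :=
    (rpow_le_rpow (hvpos x₀ hx₀).le hvx₀ hr.le).trans (le_max_left _ _)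
  have hosc := (le_abs_self _).trans (abs_sub_le_integral_abs_derivWithin one_pos hg hx hx₀)
  have hL1 := integral_abs_le_sqrt_mul_integral_sq zero_le_one
    (hg.continuousOn_derivWithin (uniqueDiffOn_Icc one_pos) le_rfl)
  rw [sub_zero, one_mul] at hL1
  have hsqrt : √(∫ y in (0:ℝ)..1, derivWithin g (Icc 0 1) y ^ 2)
      ≤ C * √(∫ y in (0:ℝ)..1, derivWithin g (Icc 0 1) y ^ 2) :=
    le_mul_of_one_le_left (sqrt_nonneg _) (le_max_right _ _)
  change g x ≤ _
  linarith

/-- Lemma 1.4 (ii): if `ρ ≥ 0` is integrable on `[0,1]` with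
`0 < M ≤ ∫₀¹ ρ ≤ K`, then for any `r > 0` and `C̄ > 0` there is a constant
`C = C(M, K, r, C̄) > 0` such that every positive `v ∈ C¹([0,1])` with
`∫₀¹ ρ |v| ≤ C̄` satisfies `sup_{[0,1]} v^r ≤ C ‖(v^r)'‖_{L²(0,1)} + C`. -/
theorem stmt1 (ρ : ℝ → ℝ) (M K : ℝ) (hM : 0 < M) (hMK : M ≤ K)
    (hρ_nonneg : ∀ x ∈ Set.Icc (0:ℝ) 1, 0 ≤ ρ x)
    (hρ_int : IntervalIntegrable ρ MeasureTheory.volume 0 1)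
    (hmass_low : M ≤ ∫ x in (0:ℝ)..1, ρ x)
    (hmass_up : (∫ x in (0:ℝ)..1, ρ x) ≤ K)
    (r Cbar : ℝ) (hr : 0 < r) (hCbar : 0 < Cbar) :
    ∃ C : ℝ, 0 < C ∧ ∀ v : ℝ → ℝ, ContDiffOn ℝ 1 v (Set.Icc 0 1) →
      (∀ x ∈ Set.Icc (0:ℝ) 1, 0 < v x) →
      (∫ x in (0:ℝ)..1, ρ x * |v x|) ≤ Cbar →
      ∀ x ∈ Set.Icc (0:ℝ) 1,
        v x ^ r ≤ C * Real.sqrt (∫ y in (0:ℝ)..1,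
            (derivWithin (fun z => v z ^ r) (Set.Icc 0 1) y) ^ 2) + C :=
  stmt1_general ρ M hM hρ_nonneg hρ_int hmass_low r Cbar hr
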